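/- arXiv:2305.19147 — 5 statements merged into one kernel-verified Lean document; each statement's English description precedes it below -/
import Mathlib

section
/- Let t > 0, c = e^{-t/2}, σ² = 1 - e^{-t}. Let E = EuclideanSpace ℝ (Fin n) and let C : E → E be a continuous linear bijection that is symmetric (⟪Cu, w⟫ = ⟪u, Cw⟫ for all u, w) and positive definite (⟪Cu, u⟫ > 0 for u ≠ 0). Define the kernel k(x, x₀) = exp(−⟪x − c·x₀, C⁻¹(x − c·x₀)⟫ / (2σ²)). Let ρ : E → ℝ be measurable with ρ ≥ 0, ∫ ρ = 1 and ∫ ‖x₀‖ ρ(x₀) dx₀ < ∞. Define p(x) = ∫ ρ(x₀) k(x, x₀) dx₀ and m(x) = (∫ x₀ ρ(x₀) k(x, x₀) dx₀) / p(x). Then for every x ∈ E: p(x) > 0, p is differentiable at x, and C applied to the gradient of log p at x equals −(1 − e^{-t})^{-1} (x − e^{-t/2} m(x)); equivalently, C(∇p(x)) = −σ^{-2} p(x) (x − c·m(x)). -/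
open MeasureTheory Real
open scoped InnerProductSpace

lemma aux_deriv_k {n : ℕ} (S : EuclideanSpace ℝ (Fin n) →L[ℝ] EuclideanSpace ℝ (Fin n))
    (hS : ∀ u w, ⟪S u, w⟫_ℝ = ⟪u, S w⟫_ℝ) (σ2 : ℝ) (hσ : σ2 ≠ 0)
    (a x : EuclideanSpace ℝ (Fin n)) :
    HasFDerivAt (fun x => Real.exp (-⟪x - a, S (x - a)⟫_ℝ / (2 * σ2)))
      ((Real.exp (-⟪x - a, S (x - a)⟫_ℝ / (2 * σ2)) * (-σ2⁻¹)) • innerSL ℝ (S (x - a))) x := by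
  have hf : HasFDerivAt (fun x : EuclideanSpace ℝ (Fin n) => x - a)
      (ContinuousLinearMap.id ℝ _) x := (hasFDerivAt_id x).sub_const a
  have hg : HasFDerivAt (fun x : EuclideanSpace ℝ (Fin n) => S (x - a)) S x := by
    have h2 := S.hasFDerivAt.comp x hf
    rw [ContinuousLinearMap.comp_id] at h2
    exact h2
  have hinner : HasFDerivAt (fun x : EuclideanSpace ℝ (Fin n) => ⟪x - a, S (x - a)⟫_ℝ)
      ((2 : ℝ) • innerSL ℝ (S (x - a))) x := by
    refine (hf.inner ℝ hg).congr_fderiv ?_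
    refine ContinuousLinearMap.ext fun h => ?_
    simp only [ContinuousLinearMap.coe_smul', Pi.smul_apply, innerSL_apply_apply, smul_eq_mul,
      ContinuousLinearMap.coe_comp', Function.comp_apply, ContinuousLinearMap.prod_apply,
      ContinuousLinearMap.coe_id', id_eq, fderivInnerCLM_apply]
    rw [← hS (x - a) h, real_inner_comm h (S (x - a))]
    ring
  have hmain := (((hinner.neg).const_mul ((2 * σ2)⁻¹)).exp)
  have hfun : (fun x : EuclideanSpace ℝ (Fin n) =>
      Real.exp ((2 * σ2)⁻¹ * -⟪x - a, S (x - a)⟫_ℝ))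
      = fun x => Real.exp (-⟪x - a, S (x - a)⟫_ℝ / (2 * σ2)) := by
    funext y; rw [div_eq_inv_mul]
  simp only [Pi.neg_apply] at hmain
  rw [hfun] at hmain
  refine hmain.congr_fderiv ?_
  ext h
  simp only [ContinuousLinearMap.coe_smul', Pi.smul_apply, innerSL_apply_apply, smul_eq_mul,
    ContinuousLinearMap.neg_apply]
  rw [div_eq_inv_mul]
  field_simp

set_option maxHeartbeats 1000000 in
/-- Finite-dimensional conditional score identity (Lemma 1):
`C ∇ log p(x) = −(1−e^{-t})⁻¹ (x − e^{-t/2} m(x))`, equivalently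
`C ∇p(x) = −σ⁻² p(x) (x − c m(x))`. -/
theorem conditional_score_identity_finite_dim {n : ℕ} (t : ℝ) (ht : 0 < t)
    (C : EuclideanSpace ℝ (Fin n) ≃L[ℝ] EuclideanSpace ℝ (Fin n))
    (hCsym : ∀ u w : EuclideanSpace ℝ (Fin n), ⟪C u, w⟫_ℝ = ⟪u, C w⟫_ℝ)
    (hCpos : ∀ u : EuclideanSpace ℝ (Fin n), u ≠ 0 → 0 < ⟪C u, u⟫_ℝ)
    (ρ : EuclideanSpace ℝ (Fin n) → ℝ)
    (hρm : Measurable ρ) (hρ0 : ∀ x₀, 0 ≤ ρ x₀)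
    (hρ1 : ∫ x₀, ρ x₀ = 1)
    (hρnorm : Integrable fun x₀ : EuclideanSpace ℝ (Fin n) => ‖x₀‖ * ρ x₀)
    (k : EuclideanSpace ℝ (Fin n) → EuclideanSpace ℝ (Fin n) → ℝ)
    (hk : k = fun x x₀ =>
      Real.exp (-⟪x - Real.exp (-t / 2) • x₀, C.symm (x - Real.exp (-t / 2) • x₀)⟫_ℝ /
        (2 * (1 - Real.exp (-t)))))
    (p : EuclideanSpace ℝ (Fin n) → ℝ)
    (hp : p = fun x => ∫ x₀, ρ x₀ * k x x₀)
    (m : EuclideanSpace ℝ (Fin n) → EuclideanSpace ℝ (Fin n))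
    (hm : m = fun x => (p x)⁻¹ • ∫ x₀, (ρ x₀ * k x x₀) • x₀) :
    ∀ x : EuclideanSpace ℝ (Fin n),
      0 < p x ∧ DifferentiableAt ℝ p x ∧
      C (gradient (fun z => Real.log (p z)) x)
        = -(1 - Real.exp (-t))⁻¹ • (x - Real.exp (-t / 2) • m x) ∧
      C (gradient p x)
        = (-(1 - Real.exp (-t))⁻¹ * p x) • (x - Real.exp (-t / 2) • m x) := by
  intro x
  have hexpt : Real.exp (-t) < 1 := by
    calc Real.exp (-t) < Real.exp 0 := Real.exp_lt_exp.mpr (by linarith)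
    _ = 1 := Real.exp_zero
  set σ2 : ℝ := 1 - Real.exp (-t) with hσ2def
  have hσ2 : 0 < σ2 := by rw [hσ2def]; linarith
  set c : ℝ := Real.exp (-t / 2) with hcdef
  have hc : 0 < c := Real.exp_pos _
  set S : EuclideanSpace ℝ (Fin n) →L[ℝ] EuclideanSpace ℝ (Fin n) :=
    (C.symm : EuclideanSpace ℝ (Fin n) →L[ℝ] EuclideanSpace ℝ (Fin n)) with hSdef
  have hSapp : ∀ v, S v = C.symm v := fun _ => rfl
  have hCS : ∀ v, C (S v) = v := fun v => C.apply_symm_apply v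
  have hSsym : ∀ u w, ⟪S u, w⟫_ℝ = ⟪u, S w⟫_ℝ := by
    intro u w
    calc ⟪S u, w⟫_ℝ = ⟪S u, C (S w)⟫_ℝ := by rw [hCS]
    _ = ⟪C (S u), S w⟫_ℝ := (hCsym (S u) (S w)).symm
    _ = ⟪u, S w⟫_ℝ := by rw [hCS]
  have hSnn : ∀ v, 0 ≤ ⟪v, S v⟫_ℝ := by
    intro v
    rcases eq_or_ne v 0 with h | h
    · simp [h]
    · have h1 : S v ≠ 0 := by
        rw [hSapp]
        intro h0
        exact h (by simpa using congrArg C h0)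
      have h2 := hCpos (S v) h1
      rw [hCS] at h2
      exact h2.le
  have hk' : k = fun x' x₀ => Real.exp (-⟪x' - c • x₀, S (x' - c • x₀)⟫_ℝ / (2 * σ2)) := hk
  have hkpos : ∀ x' x₀, 0 < k x' x₀ := by
    intro x' x₀; rw [hk']; exact Real.exp_pos _
  have hkle : ∀ x' x₀, k x' x₀ ≤ 1 := by
    intro x' x₀
    rw [hk']
    rw [Real.exp_le_one_iff]
    apply div_nonpos_of_nonpos_of_nonneg
    · exact neg_nonpos.mpr (hSnn _)
    · positivity
  have hkcont : ∀ x', Continuous (fun x₀ => k x' x₀) := by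
    intro x'
    have hcont0 : Continuous fun x₀ : EuclideanSpace ℝ (Fin n) => x' - c • x₀ :=
      continuous_const.sub (continuous_id.const_smul c)
    have hcont1 : Continuous fun x₀ : EuclideanSpace ℝ (Fin n) =>
        Real.exp (-⟪x' - c • x₀, S (x' - c • x₀)⟫_ℝ / (2 * σ2)) :=
      Real.continuous_exp.comp ((hcont0.inner (S.continuous.comp hcont0)).neg.div_const _)
    simpa [hk'] using hcont1
  have hρint : Integrable ρ := by
    by_contra h
    rw [integral_undef h] at hρ1
    exact one_ne_zero hρ1.symm
  have hI1 : ∀ x', Integrable (fun x₀ => ρ x₀ * k x' x₀) := by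
    intro x'
    refine Integrable.mono hρint ((hρm.mul (hkcont x').measurable).aestronglyMeasurable) ?_
    filter_upwards with x₀
    simp only [norm_mul, Real.norm_eq_abs]
    calc |ρ x₀| * |k x' x₀| ≤ |ρ x₀| * 1 := by
          gcongr
          exact abs_le.mpr ⟨by linarith [hkpos x' x₀], hkle x' x₀⟩
    _ = |ρ x₀| := mul_one _
  have hI2 : ∀ x', Integrable (fun x₀ => (ρ x₀ * k x' x₀) • x₀) := by
    intro x'
    refine Integrable.mono' hρnorm
      (((hρm.mul (hkcont x').measurable).aestronglyMeasurable).smul aestronglyMeasurable_id) ?_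
    filter_upwards with x₀
    rw [norm_smul]
    simp only [Real.norm_eq_abs]
    rw [abs_of_nonneg (mul_nonneg (hρ0 x₀) (hkpos x' x₀).le)]
    calc ρ x₀ * k x' x₀ * ‖x₀‖ ≤ ρ x₀ * 1 * ‖x₀‖ := by
          nlinarith [mul_nonneg (mul_nonneg (hρ0 x₀) (norm_nonneg x₀))
            (sub_nonneg.mpr (hkle x' x₀))]
    _ = ‖x₀‖ * ρ x₀ := by ring
  have hppos : ∀ x', 0 < p x' := by
    intro x'
    simp only [hp]
    refine (integral_pos_iff_support_of_nonneg
      (fun x₀ => mul_nonneg (hρ0 x₀) (hkpos x' x₀).le) (hI1 x')).mpr ?_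
    have hsupp : (Function.support fun x₀ => ρ x₀ * k x' x₀) = Function.support ρ := by
      ext x₀
      simp [Function.mem_support, mul_eq_zero, (hkpos x' x₀).ne']
    rw [hsupp]
    rcases eq_or_ne (volume (Function.support ρ)) 0 with h0 | h0
    · exfalso
      have hae : ρ =ᵐ[volume] 0 := by
        rw [Filter.EventuallyEq, ae_iff]
        simpa [Function.support] using h0
      rw [integral_congr_ae hae] at hρ1
      simp at hρ1
    · exact h0.bot_lt
  have hpne : p x ≠ 0 := (hppos x).ne'
  -- derivative of the integrand
  set F' : EuclideanSpace ℝ (Fin n) → EuclideanSpace ℝ (Fin n) →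
      (EuclideanSpace ℝ (Fin n) →L[ℝ] ℝ) :=
    fun x' x₀ => innerSL ℝ (((ρ x₀ * k x' x₀) * (-σ2⁻¹)) • S (x' - c • x₀)) with hF'def
  have hpull : ∀ (a : ℝ) (v : EuclideanSpace ℝ (Fin n)),
      a • innerSL ℝ v = innerSL ℝ (a • v) := by
    intro a v
    refine ContinuousLinearMap.ext fun h => ?_
    simp only [ContinuousLinearMap.coe_smul', Pi.smul_apply, innerSL_apply_apply, smul_eq_mul]
    rw [real_inner_smul_left]
  have hder : ∀ x' x₀, HasFDerivAt (fun y => ρ x₀ * k y x₀) (F' x' x₀) x' := by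
    intro x' x₀
    have h1 := aux_deriv_k S hSsym σ2 hσ2.ne' (c • x₀) x'
    have h2 := h1.const_mul (ρ x₀)
    have h3 : HasFDerivAt (fun y => ρ x₀ * k y x₀)
        (ρ x₀ • ((k x' x₀ * -σ2⁻¹) • innerSL ℝ (S (x' - c • x₀)))) x' := by
      simp only [hk']
      exact h2
    have h4 : F' x' x₀ = ρ x₀ • ((k x' x₀ * -σ2⁻¹) • innerSL ℝ (S (x' - c • x₀))) := by
      simp only [hF'def]
      rw [smul_smul, hpull, mul_assoc]
    rw [h4]
    exact h3
  -- the uniform bound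
  set B : EuclideanSpace ℝ (Fin n) → ℝ :=
    fun x₀ => ρ x₀ * σ2⁻¹ * (‖S‖ * (‖x‖ + 1 + c * ‖x₀‖)) with hBdef
  have hbound : ∀ x₀, ∀ y ∈ Metric.ball x 1, ‖F' y x₀‖ ≤ B x₀ := by
    intro x₀ y hy
    have h1 : ‖F' y x₀‖ = ρ x₀ * k y x₀ * σ2⁻¹ * ‖S (y - c • x₀)‖ := by
      simp only [hF'def, innerSL_apply_norm]
      rw [norm_smul, Real.norm_eq_abs, abs_mul, abs_mul, abs_neg, abs_inv,
        abs_of_nonneg (hρ0 x₀), abs_of_pos (hkpos y x₀), abs_of_pos hσ2]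
    have hy' : ‖y‖ ≤ ‖x‖ + 1 := by
      have h2 : ‖y - x‖ < 1 := mem_ball_iff_norm.mp hy
      calc ‖y‖ = ‖(y - x) + x‖ := by rw [sub_add_cancel]
      _ ≤ ‖y - x‖ + ‖x‖ := norm_add_le _ _
      _ ≤ ‖x‖ + 1 := by linarith
    have h2 : ‖S (y - c • x₀)‖ ≤ ‖S‖ * (‖x‖ + 1 + c * ‖x₀‖) := by
      refine (S.le_opNorm _).trans ?_
      have h3 : ‖y - c • x₀‖ ≤ ‖x‖ + 1 + c * ‖x₀‖ := by
        calc ‖y - c • x₀‖ ≤ ‖y‖ + ‖c • x₀‖ := norm_sub_le _ _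
        _ = ‖y‖ + c * ‖x₀‖ := by rw [norm_smul, Real.norm_eq_abs, abs_of_pos hc]
        _ ≤ ‖x‖ + 1 + c * ‖x₀‖ := by linarith
      exact mul_le_mul_of_nonneg_left h3 (norm_nonneg _)
    rw [h1, hBdef]
    calc ρ x₀ * k y x₀ * σ2⁻¹ * ‖S (y - c • x₀)‖
        ≤ ρ x₀ * 1 * σ2⁻¹ * (‖S‖ * (‖x‖ + 1 + c * ‖x₀‖)) := by
          have hA : ρ x₀ * k y x₀ * σ2⁻¹ ≤ ρ x₀ * 1 * σ2⁻¹ := by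
            nlinarith [mul_nonneg (mul_nonneg (hρ0 x₀) (inv_pos.mpr hσ2).le)
              (sub_nonneg.mpr (hkle y x₀))]
          exact mul_le_mul hA h2 (norm_nonneg _)
            (mul_nonneg (mul_nonneg (hρ0 x₀) zero_le_one) (inv_pos.mpr hσ2).le)
    _ = ρ x₀ * σ2⁻¹ * (‖S‖ * (‖x‖ + 1 + c * ‖x₀‖)) := by ring
  have hBint : Integrable B := by
    have hB2 : Integrable (fun x₀ : EuclideanSpace ℝ (Fin n) =>
        (σ2⁻¹ * (‖S‖ * (‖x‖ + 1))) * ρ x₀ + (σ2⁻¹ * ‖S‖ * c) * (‖x₀‖ * ρ x₀)) :=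
      (hρint.const_mul _).add (hρnorm.const_mul _)
    refine hB2.congr (Filter.Eventually.of_forall fun x₀ => ?_)
    rw [hBdef]
    ring
  have hF'meas : ∀ x', AEStronglyMeasurable (fun x₀ => F' x' x₀) volume := by
    intro x'
    rw [hF'def]
    refine (innerSL ℝ).continuous.comp_aestronglyMeasurable ?_
    exact (((hρm.mul (hkcont x').measurable).mul_const _).aestronglyMeasurable).smul
      ((S.continuous.comp (continuous_const.sub (continuous_id.const_smul c))).aestronglyMeasurable)
  have hfderiv : HasFDerivAt p (∫ x₀, F' x x₀) x := by
    rw [hp]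
    exact hasFDerivAt_integral_of_dominated_of_fderiv_le (E := ℝ) (Metric.ball_mem_nhds x (by norm_num : (0:ℝ) < 1))
      (Filter.Eventually.of_forall fun y => (hI1 y).aestronglyMeasurable)
      (hI1 x) (hF'meas x)
      (Filter.Eventually.of_forall fun x₀ y hy => hbound x₀ y hy)
      hBint
      (Filter.Eventually.of_forall fun x₀ y _ => hder y x₀)
  have hI3 : Integrable (fun x₀ => F' x x₀) :=
    Integrable.mono' hBint (hF'meas x)
      (Filter.Eventually.of_forall fun x₀ => hbound x₀ x (Metric.mem_ball_self one_pos))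
  set I : EuclideanSpace ℝ (Fin n) := ∫ x₀, (ρ x₀ * k x x₀) • x₀ with hIdef
  have heq4 : (fun x₀ => (ρ x₀ * k x x₀) • (x - c • x₀))
      = fun x₀ => (ρ x₀ * k x x₀) • x - c • ((ρ x₀ * k x x₀) • x₀) := by
    funext x₀
    rw [smul_sub, smul_comm]
  have hI4 : Integrable (fun x₀ => (ρ x₀ * k x x₀) • (x - c • x₀)) := by
    rw [heq4]
    exact ((hI1 x).smul_const x).sub ((hI2 x).smul c)
  have hJ : ∫ x₀, (ρ x₀ * k x x₀) • (x - c • x₀) = p x • x - c • I := by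
    have hint1 : Integrable (fun x₀ => (ρ x₀ * k x x₀) • x) := (hI1 x).smul_const x
    have hint2 : Integrable (fun x₀ => c • ((ρ x₀ * k x x₀) • x₀)) := (hI2 x).smul c
    rw [heq4, integral_sub hint1 hint2, integral_smul_const, integral_smul]
    rw [hIdef, hp]
  set g : EuclideanSpace ℝ (Fin n) := (-σ2⁻¹) • S (p x • x - c • I) with hgdef
  have hΦ : (∫ x₀, F' x x₀) = (InnerProductSpace.toDual ℝ _) g := by
    refine ContinuousLinearMap.ext fun h => ?_
    rw [ContinuousLinearMap.integral_apply hI3]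
    have happly : ∀ x₀, F' x x₀ h
        = (-σ2⁻¹) * (((innerSL ℝ h).comp S) ((ρ x₀ * k x x₀) • (x - c • x₀))) := by
      intro x₀
      simp only [hF'def, innerSL_apply_apply, ContinuousLinearMap.coe_comp', Function.comp_apply,
        _root_.map_smul, inner_smul_left, real_inner_smul_left, inner_smul_right,
        ContinuousLinearMap.coe_smul', Pi.smul_apply, smul_eq_mul, RCLike.star_def,
        starRingEnd_apply, star_trivial]
      rw [real_inner_comm h (S (x - c • x₀))]
      ring
    simp only [happly]
    rw [integral_const_mul, ContinuousLinearMap.integral_comp_comm _ hI4, hJ]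
    rw [hgdef, InnerProductSpace.toDual_apply_apply, real_inner_smul_left]
    simp only [ContinuousLinearMap.coe_comp', Function.comp_apply, innerSL_apply_apply]
    rw [real_inner_comm h (S (p x • x - c • I))]
  have hgrad : HasGradientAt p g x := by
    rw [hasGradientAt_iff_hasFDerivAt, ← hΦ]
    exact hfderiv
  have hCg : C g = (-σ2⁻¹ * p x) • (x - c • m x) := by
    have h1 : C g = (-σ2⁻¹) • (p x • x - c • I) := by
      rw [hgdef, _root_.map_smul]
      congr 1
      exact hCS _
    rw [h1]
    simp only [hm, ← hIdef]
    match_scalars <;> field_simp <;> ring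
  have hlogf : HasFDerivAt (fun z => Real.log (p z)) ((p x)⁻¹ • (∫ x₀, F' x x₀)) x :=
    (Real.hasDerivAt_log hpne).comp_hasFDerivAt x hfderiv
  have hloggrad : HasGradientAt (fun z => Real.log (p z)) ((p x)⁻¹ • g) x := by
    rw [hasGradientAt_iff_hasFDerivAt, _root_.map_smul, ← hΦ]
    exact hlogf
  refine ⟨hppos x, hfderiv.differentiableAt, ?_, ?_⟩
  · rw [hloggrad.gradient, _root_.map_smul, hCg, smul_smul]
    congr 1
    field_simp
  · rw [hgrad.gradient, hCg]
end

section
/- Let 0 ≤ s < t, c = e^{-(t-s)/2}, σ² = 1 - e^{-(t-s)}. Let E = EuclideanSpace ℝ (Fin n) and let C : E → E be a continuous linear bijection that is symmetric (⟪Cu, w⟫ = ⟪u, Cw⟫ for all u, w) and positive definite (⟪Cu, u⟫ > 0 for u ≠ 0). Define the kernel k(x, v) = exp(−⟪x − c·v, C⁻¹(x − c·v)⟫ / (2σ²)). Let p_s : E → ℝ be continuously differentiable with p_s integrable and with gradient ∇p_s integrable (∫ ‖∇p_s(v)‖ dv < ∞). Define q(x) = ∫ p_s(v) k(x, v) dv.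 Then q is differentiable at every x ∈ E and ∇q(x) = e^{(t-s)/2} ∫ k(x, v) (∇p_s)(v) dv. -/
set_option maxHeartbeats 1000000
set_option synthInstance.maxHeartbeats 400000


open MeasureTheory Real
open scoped InnerProductSpace

section Aux

variable {n : ℕ}

local notation "E" => EuclideanSpace ℝ (Fin n)

/-- The centered Gaussian-type kernel. -/
noncomputable def gK (C : EuclideanSpace ℝ (Fin n) ≃L[ℝ] EuclideanSpace ℝ (Fin n)) (σ2 : ℝ)
    (y : EuclideanSpace ℝ (Fin n)) : ℝ :=
  Real.exp (-⟪y, C.symm y⟫_ℝ / (2 * σ2))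

/-- Its Fréchet derivative. -/
noncomputable def GK (C : EuclideanSpace ℝ (Fin n) ≃L[ℝ] EuclideanSpace ℝ (Fin n)) (σ2 : ℝ)
    (y : EuclideanSpace ℝ (Fin n)) : EuclideanSpace ℝ (Fin n) →L[ℝ] ℝ :=
  (-(gK C σ2 y) / σ2) • innerSL ℝ (C.symm y)

lemma gK_pos (C : E ≃L[ℝ] E) (σ2 : ℝ) (y : E) : 0 < gK C σ2 y := Real.exp_pos _

lemma gK_cont (C : E ≃L[ℝ] E) (σ2 : ℝ) : Continuous (gK C σ2) :=
  Real.continuous_exp.comp ((Continuous.inner continuous_id C.symm.continuous).neg.div_const _)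

lemma GK_cont (C : E ≃L[ℝ] E) (σ2 : ℝ) : Continuous (GK C σ2) :=
  (((gK_cont C σ2).neg).div_const σ2).smul ((innerSL ℝ).continuous.comp C.symm.continuous)

lemma gK_hasFDerivAt (C : E ≃L[ℝ] E) {σ2 : ℝ} (hσ2 : σ2 ≠ 0)
    (hsym : ∀ u w : E, ⟪C.symm u, w⟫_ℝ = ⟪u, C.symm w⟫_ℝ) (y : E) :
    HasFDerivAt (gK C σ2) (GK C σ2 y) y := by
  have h1 : HasFDerivAt (fun y : E => ⟪y, C.symm y⟫_ℝ)
      ((fderivInnerCLM ℝ (y, C.symm y)).comp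
        ((ContinuousLinearMap.id ℝ E).prod (C.symm : E →L[ℝ] E))) y :=
    (hasFDerivAt_id y).inner ℝ ((C.symm : E →L[ℝ] E).hasFDerivAt)
  have h2 := (h1.const_mul (-(2 * σ2)⁻¹)).exp
  have hfun : gK C σ2 = fun y : E => Real.exp (-(2 * σ2)⁻¹ * ⟪y, C.symm y⟫_ℝ) := by
    funext y
    show Real.exp _ = Real.exp _
    congr 1
    ring
  rw [hfun]
  refine h2.congr_fderiv ?_
  ext w
  have hyw : ⟪y, C.symm w⟫_ℝ = ⟪C.symm y, w⟫_ℝ := (hsym y w).symm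
  have hwy : ⟪w, C.symm y⟫_ℝ = ⟪C.symm y, w⟫_ℝ := real_inner_comm _ _
  have hgy : gK C σ2 y = Real.exp (-(2 * σ2)⁻¹ * ⟪y, C.symm y⟫_ℝ) := by rw [hfun]
  simp only [GK, ContinuousLinearMap.smul_apply, innerSL_apply_apply, ContinuousLinearMap.comp_apply,
    ContinuousLinearMap.prod_apply, ContinuousLinearMap.coe_id', id_eq,
    ContinuousLinearEquiv.coe_coe, fderivInnerCLM_apply, smul_eq_mul, hyw, hwy, hgy]
  field_simp
  ring

lemma rexp_bound {β : ℝ} (hβ : 0 < β) {r : ℝ} (hr : 0 ≤ r) :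
    r * Real.exp (-(β * r ^ 2)) ≤ 1 / (2 * Real.sqrt β) := by
  have h1 : (1 : ℝ) + β * r ^ 2 ≤ Real.exp (β * r ^ 2) := by
    have := Real.add_one_le_exp (β * r ^ 2); linarith
  have hpos : (0 : ℝ) < 1 + β * r ^ 2 := by positivity
  have h2 : Real.exp (-(β * r ^ 2)) ≤ (1 + β * r ^ 2)⁻¹ := by
    rw [Real.exp_neg]
    exact inv_anti₀ hpos h1
  have hs := Real.sq_sqrt hβ.le
  have hs0 := Real.sqrt_pos.mpr hβ
  calc r * Real.exp (-(β * r ^ 2)) ≤ r * (1 + β * r ^ 2)⁻¹ :=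
        mul_le_mul_of_nonneg_left h2 hr
    _ ≤ 1 / (2 * Real.sqrt β) := by
        rw [← div_eq_mul_inv, div_le_div_iff₀ hpos (by positivity)]
        nlinarith [sq_nonneg (1 - Real.sqrt β * r), hs, hs0, hr]

end Aux


/-- Core of the reverse-time martingale lemma for the score:
`∇q(x) = e^{(t-s)/2} ∫ k(x,v) ∇p_s(v) dv` for the Gaussian smoothing
`q(x) = ∫ p_s(v) k(x,v) dv`. -/
theorem gradient_of_gaussian_smoothing {n : ℕ} (s t : ℝ) (hs : 0 ≤ s) (hst : s < t)
    (C : EuclideanSpace ℝ (Fin n) ≃L[ℝ] EuclideanSpace ℝ (Fin n))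
    (hCsym : ∀ u w : EuclideanSpace ℝ (Fin n), ⟪C u, w⟫_ℝ = ⟪u, C w⟫_ℝ)
    (hCpos : ∀ u : EuclideanSpace ℝ (Fin n), u ≠ 0 → 0 < ⟪C u, u⟫_ℝ)
    (k : EuclideanSpace ℝ (Fin n) → EuclideanSpace ℝ (Fin n) → ℝ)
    (hk : k = fun x v =>
      Real.exp (-⟪x - Real.exp (-(t - s) / 2) • v, C.symm (x - Real.exp (-(t - s) / 2) • v)⟫_ℝ /
        (2 * (1 - Real.exp (-(t - s))))))
    (ps : EuclideanSpace ℝ (Fin n) → ℝ)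
    (hps : ContDiff ℝ 1 ps) (hpsInt : Integrable ps)
    (hgradInt : Integrable fun v : EuclideanSpace ℝ (Fin n) => ‖gradient ps v‖)
    (q : EuclideanSpace ℝ (Fin n) → ℝ)
    (hq : q = fun x => ∫ v, ps v * k x v) :
    ∀ x : EuclideanSpace ℝ (Fin n),
      DifferentiableAt ℝ q x ∧
      gradient q x = Real.exp ((t - s) / 2) • ∫ v, k x v • gradient ps v := by
  intro x
  subst hq
  have hts : 0 < t - s := sub_pos.mpr hst
  set σ2 : ℝ := 1 - Real.exp (-(t - s)) with hσ2def
  have hσ2 : 0 < σ2 := by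
    have h1 : Real.exp (-(t - s)) < 1 := Real.exp_lt_one_iff.mpr (by linarith)
    simp only [hσ2def]; linarith
  set c : ℝ := Real.exp (-(t - s) / 2) with hcdef
  have hc : 0 < c := Real.exp_pos _
  have hcinv : Real.exp ((t - s) / 2) = c⁻¹ := by
    rw [hcdef, ← Real.exp_neg]
    congr 1
    ring
  -- symmetry of `C.symm`
  have hsym : ∀ u w : (EuclideanSpace ℝ (Fin n)), ⟪C.symm u, w⟫_ℝ = ⟪u, C.symm w⟫_ℝ := by
    intro u w
    calc ⟪C.symm u, w⟫_ℝ = ⟪C.symm u, C (C.symm w)⟫_ℝ := by rw [C.apply_symm_apply]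
      _ = ⟪C (C.symm u), C.symm w⟫_ℝ := (hCsym (C.symm u) (C.symm w)).symm
      _ = ⟪u, C.symm w⟫_ℝ := by rw [C.apply_symm_apply]
  -- nonnegativity of the quadratic form
  have hQpos : ∀ y : (EuclideanSpace ℝ (Fin n)), y ≠ 0 → 0 < ⟪y, C.symm y⟫_ℝ := by
    intro y hy
    have h1 : C.symm y ≠ 0 := by
      intro h
      apply hy
      have := congrArg C h
      rwa [C.apply_symm_apply, map_zero] at this
    have := hCpos (C.symm y) h1
    rwa [C.apply_symm_apply] at this
  have hQnonneg : ∀ y : (EuclideanSpace ℝ (Fin n)), 0 ≤ ⟪y, C.symm y⟫_ℝ := by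
    intro y
    rcases eq_or_ne y 0 with rfl | hy
    · simp
    · exact (hQpos y hy).le
  -- the kernel as a function of `y = x - c • v`
  have hk' : ∀ x v : (EuclideanSpace ℝ (Fin n)), k x v = gK C σ2 (x - c • v) := by
    intro x v
    rw [hk]
    rfl
  have hgK_le_one : ∀ y : (EuclideanSpace ℝ (Fin n)), gK C σ2 y ≤ 1 := by
    intro y
    apply Real.exp_le_one_iff.mpr
    apply div_nonpos_of_nonpos_of_nonneg
    · exact neg_nonpos.mpr (hQnonneg y)
    · positivity
  -- lower bound on the quadratic form
  have hα : ∃ α : ℝ, 0 < α ∧ ∀ y : (EuclideanSpace ℝ (Fin n)), α * ‖y‖ ^ 2 ≤ ⟪y, C.symm y⟫_ℝ := by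
    by_cases hE : ∀ y : (EuclideanSpace ℝ (Fin n)), y = 0
    · exact ⟨1, one_pos, fun y => by rw [hE y]; simp⟩
    · push_neg at hE
      obtain ⟨y₀, hy₀⟩ := hE
      have hsphere : (Metric.sphere (0 : (EuclideanSpace ℝ (Fin n))) 1).Nonempty := by
        refine ⟨‖y₀‖⁻¹ • y₀, ?_⟩
        have h0 : ‖y₀‖ ≠ 0 := norm_ne_zero_iff.mpr hy₀
        simp [norm_smul, abs_of_nonneg (inv_nonneg.mpr (norm_nonneg y₀)),
          inv_mul_cancel₀ h0]
      have hcont : Continuous fun y : (EuclideanSpace ℝ (Fin n)) => ⟪y, C.symm y⟫_ℝ :=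
        Continuous.inner continuous_id C.symm.continuous
      obtain ⟨u, hu, hmin'⟩ :=
        (isCompact_sphere (0 : (EuclideanSpace ℝ (Fin n))) 1).exists_isMinOn hsphere hcont.continuousOn
      have hmin : ∀ y ∈ Metric.sphere (0 : (EuclideanSpace ℝ (Fin n))) 1, ⟪u, C.symm u⟫_ℝ ≤ ⟪y, C.symm y⟫_ℝ :=
        fun y hy => hmin' hy
      have hu1 : ‖u‖ = 1 := by simpa using hu
      have hune : u ≠ 0 := by
        intro h; rw [h] at hu1; simp at hu1
      refine ⟨⟪u, C.symm u⟫_ℝ, hQpos u hune, fun y => ?_⟩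
      rcases eq_or_ne y 0 with rfl | hy
      · simp
      · have hny : (0 : ℝ) < ‖y‖ := norm_pos_iff.mpr hy
        have hmem : ‖y‖⁻¹ • y ∈ Metric.sphere (0 : (EuclideanSpace ℝ (Fin n))) 1 := by
          simp [norm_smul, abs_of_nonneg (inv_nonneg.mpr (norm_nonneg y)),
            inv_mul_cancel₀ hny.ne']
        have h1 := hmin _ hmem
        rw [_root_.map_smul, real_inner_smul_left, real_inner_smul_right] at h1
        have h4 : ‖y‖⁻¹ * (‖y‖⁻¹ * ⟪y, C.symm y⟫_ℝ) = ⟪y, C.symm y⟫_ℝ / ‖y‖ ^ 2 := by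
          rw [pow_two, div_eq_mul_inv, mul_inv]
          ring
        rw [h4] at h1
        rw [← le_div_iff₀ (by positivity : (0:ℝ) < ‖y‖ ^ 2)]
        exact h1
  obtain ⟨α, hα0, hαle⟩ := hα
  -- global bound on `GK`
  set β : ℝ := α / (2 * σ2) with hβdef
  have hβ : 0 < β := by positivity
  set M : ℝ := σ2⁻¹ * ‖(C.symm : (EuclideanSpace ℝ (Fin n)) →L[ℝ] (EuclideanSpace ℝ (Fin n)))‖ * (1 / (2 * Real.sqrt β)) with hMdef
  have hM0 : 0 ≤ M := by positivity
  have hGbound : ∀ y : (EuclideanSpace ℝ (Fin n)), ‖GK C σ2 y‖ ≤ M := by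
    intro y
    have hgy : 0 < gK C σ2 y := gK_pos C σ2 y
    have h1 : ‖GK C σ2 y‖ ≤ gK C σ2 y / σ2 * ‖C.symm y‖ := by
      refine le_trans (ContinuousLinearMap.opNorm_smul_le _ _) ?_
      rw [innerSL_apply_norm, Real.norm_eq_abs, abs_div, abs_of_pos hσ2, abs_neg,
        abs_of_pos hgy]
    have h2 : gK C σ2 y ≤ Real.exp (-(β * ‖y‖ ^ 2)) := by
      apply Real.exp_le_exp.mpr
      rw [div_le_iff₀ (by positivity : (0:ℝ) < 2 * σ2)]
      have := hαle y
      have hβr : -(β * ‖y‖ ^ 2) * (2 * σ2) = -(α * ‖y‖ ^ 2) := by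
        rw [hβdef]; field_simp
      rw [hβr]
      linarith
    have h3 : ‖C.symm y‖ ≤ ‖(C.symm : (EuclideanSpace ℝ (Fin n)) →L[ℝ] (EuclideanSpace ℝ (Fin n)))‖ * ‖y‖ :=
      (C.symm : (EuclideanSpace ℝ (Fin n)) →L[ℝ] (EuclideanSpace ℝ (Fin n))).le_opNorm y
    have h4 : ‖y‖ * Real.exp (-(β * ‖y‖ ^ 2)) ≤ 1 / (2 * Real.sqrt β) :=
      rexp_bound hβ (norm_nonneg y)
    refine le_trans h1 ?_
    calc gK C σ2 y / σ2 * ‖C.symm y‖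
        ≤ gK C σ2 y / σ2 * (‖(C.symm : (EuclideanSpace ℝ (Fin n)) →L[ℝ] (EuclideanSpace ℝ (Fin n)))‖ * ‖y‖) := by
          apply mul_le_mul_of_nonneg_left h3 (by positivity)
      _ = σ2⁻¹ * ‖(C.symm : (EuclideanSpace ℝ (Fin n)) →L[ℝ] (EuclideanSpace ℝ (Fin n)))‖ * (‖y‖ * gK C σ2 y) := by ring
      _ ≤ σ2⁻¹ * ‖(C.symm : (EuclideanSpace ℝ (Fin n)) →L[ℝ] (EuclideanSpace ℝ (Fin n)))‖ * (‖y‖ * Real.exp (-(β * ‖y‖ ^ 2))) := by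
          apply mul_le_mul_of_nonneg_left _ (by positivity)
          exact mul_le_mul_of_nonneg_left h2 (norm_nonneg y)
      _ ≤ M := by
          rw [hMdef]
          apply mul_le_mul_of_nonneg_left h4 (by positivity)
  -- derivatives of the kernel in each variable
  have hKx : ∀ (x' v : (EuclideanSpace ℝ (Fin n))), HasFDerivAt (fun x' : (EuclideanSpace ℝ (Fin n)) => gK C σ2 (x' - c • v))
      (GK C σ2 (x' - c • v)) x' := by
    intro x' v
    have h := (gK_hasFDerivAt C hσ2.ne' hsym (x' - c • v)).comp x'
      ((hasFDerivAt_id x').sub_const (c • v))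
    exact h
  have hKv : ∀ (x' v : (EuclideanSpace ℝ (Fin n))), HasFDerivAt (fun v : (EuclideanSpace ℝ (Fin n)) => gK C σ2 (x' - c • v))
      ((-c) • GK C σ2 (x' - c • v)) v := by
    intro x' v
    have haff : HasFDerivAt (fun v : (EuclideanSpace ℝ (Fin n)) => x' - c • v)
        ((0 : (EuclideanSpace ℝ (Fin n)) →L[ℝ] (EuclideanSpace ℝ (Fin n))) - c • ContinuousLinearMap.id ℝ (EuclideanSpace ℝ (Fin n))) v :=
      (hasFDerivAt_const x' v).sub ((hasFDerivAt_id v).const_smul c)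
    have h := (gK_hasFDerivAt C hσ2.ne' hsym (x' - c • v)).comp v haff
    refine h.congr_fderiv ?_
    ext w
    simp [mul_comm]
  -- continuity facts
  have hAffCont : ∀ x' : (EuclideanSpace ℝ (Fin n)), Continuous fun v : (EuclideanSpace ℝ (Fin n)) => x' - c • v := fun x' =>
    continuous_const.sub (continuous_id.const_smul c)
  have hgradCont : Continuous fun v : (EuclideanSpace ℝ (Fin n)) => gradient ps v := by
    have h1 : Continuous fun v : (EuclideanSpace ℝ (Fin n)) => fderiv ℝ ps v := hps.continuous_fderiv one_ne_zero
    exact (InnerProductSpace.toDual ℝ (EuclideanSpace ℝ (Fin n))).symm.continuous.comp h1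
  have hgradNorm : ∀ v : (EuclideanSpace ℝ (Fin n)), ‖gradient ps v‖ = ‖fderiv ℝ ps v‖ := by
    intro v
    exact LinearIsometryEquiv.norm_map _ _
  have hgradInner : ∀ (v w : (EuclideanSpace ℝ (Fin n))), ⟪gradient ps v, w⟫_ℝ = fderiv ℝ ps v w := by
    intro v w
    exact InnerProductSpace.toDual_symm_apply
  -- integrability facts
  have hFint : ∀ x' : (EuclideanSpace ℝ (Fin n)), Integrable fun v : (EuclideanSpace ℝ (Fin n)) => ps v * gK C σ2 (x' - c • v) := by
    intro x'
    apply hpsInt.norm.mono'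
    · exact (hps.continuous.mul ((gK_cont C σ2).comp (hAffCont x'))).aestronglyMeasurable
    · filter_upwards with v
      rw [Real.norm_eq_abs, abs_mul]
      have h1 : |gK C σ2 (x' - c • v)| ≤ 1 := by
        rw [abs_of_pos (gK_pos C σ2 _)]
        exact hgK_le_one _
      calc |ps v| * |gK C σ2 (x' - c • v)| ≤ |ps v| * 1 :=
            mul_le_mul_of_nonneg_left h1 (abs_nonneg _)
        _ = ‖ps v‖ := by rw [mul_one, Real.norm_eq_abs]
  have hGint : ∀ x' : (EuclideanSpace ℝ (Fin n)), Integrable fun v : (EuclideanSpace ℝ (Fin n)) => ps v • GK C σ2 (x' - c • v) := by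
    intro x'
    apply (hpsInt.norm.mul_const M).mono'
    · exact (hps.continuous.smul ((GK_cont C σ2).comp (hAffCont x'))).aestronglyMeasurable
    · filter_upwards with v
      refine le_trans (ContinuousLinearMap.opNorm_smul_le _ _) ?_
      exact mul_le_mul_of_nonneg_left (hGbound _) (norm_nonneg _)
  -- differentiation under the integral sign
  have HF : HasFDerivAt (fun x' : (EuclideanSpace ℝ (Fin n)) => ∫ v, ps v * gK C σ2 (x' - c • v))
      (∫ v, ps v • GK C σ2 (x - c • v)) x := by
    apply hasFDerivAt_integral_of_dominated_of_fderiv_le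
      (F' := fun (x' : (EuclideanSpace ℝ (Fin n))) (v : (EuclideanSpace ℝ (Fin n))) => ps v • GK C σ2 (x' - c • v))
      (bound := fun v : (EuclideanSpace ℝ (Fin n)) => ‖ps v‖ * M) (Metric.ball_mem_nhds x one_pos)
    · filter_upwards with x'
      exact (hps.continuous.mul ((gK_cont C σ2).comp (hAffCont x'))).aestronglyMeasurable
    · exact hFint x
    · exact (hps.continuous.smul ((GK_cont C σ2).comp (hAffCont x))).aestronglyMeasurable
    · filter_upwards with v
      intro x' _
      refine le_trans (ContinuousLinearMap.opNorm_smul_le _ _) ?_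
      exact mul_le_mul_of_nonneg_left (hGbound _) (norm_nonneg _)
    · exact hpsInt.norm.mul_const M
    · filter_upwards with v
      intro x' _
      exact (hKx x' v).const_mul (ps v)
  -- the integral representation of the gradient
  have hIint : Integrable fun v : (EuclideanSpace ℝ (Fin n)) => gK C σ2 (x - c • v) • gradient ps v := by
    apply hgradInt.mono'
    · exact (((gK_cont C σ2).comp (hAffCont x)).smul hgradCont).aestronglyMeasurable
    · filter_upwards with v
      rw [norm_smul, Real.norm_eq_abs, abs_of_pos (gK_pos C σ2 _)]
      calc gK C σ2 (x - c • v) * ‖gradient ps v‖ ≤ 1 * ‖gradient ps v‖ :=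
            mul_le_mul_of_nonneg_right (hgK_le_one _) (norm_nonneg _)
        _ = ‖gradient ps v‖ := one_mul _
      -- done
  -- integration by parts, directionwise
  have hibp : ∀ w : (EuclideanSpace ℝ (Fin n)),
      (∫ v, ps v • GK C σ2 (x - c • v)) w =
        c⁻¹ * ∫ v, gK C σ2 (x - c • v) * fderiv ℝ ps v w := by
    intro w
    have hfd : ∀ v : (EuclideanSpace ℝ (Fin n)), fderiv ℝ (fun v : (EuclideanSpace ℝ (Fin n)) => gK C σ2 (x - c • v)) v
        = (-c) • GK C σ2 (x - c • v) := fun v => (hKv x v).fderiv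
    have h1 : Integrable fun v : (EuclideanSpace ℝ (Fin n)) => fderiv ℝ ps v w * gK C σ2 (x - c • v) := by
      apply (hgradInt.mul_const ‖w‖).mono'
      · apply Continuous.aestronglyMeasurable
        apply Continuous.mul _ ((gK_cont C σ2).comp (hAffCont x))
        exact (ContinuousLinearMap.apply ℝ ℝ w).continuous.comp (hps.continuous_fderiv one_ne_zero)
      · filter_upwards with v
        rw [Real.norm_eq_abs, abs_mul]
        have hb1 : |fderiv ℝ ps v w| ≤ ‖gradient ps v‖ * ‖w‖ := by
          rw [hgradNorm]
          exact (fderiv ℝ ps v).le_opNorm w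
        have hb2 : |gK C σ2 (x - c • v)| ≤ 1 := by
          rw [abs_of_pos (gK_pos C σ2 _)]; exact hgK_le_one _
        calc |fderiv ℝ ps v w| * |gK C σ2 (x - c • v)|
            ≤ (‖gradient ps v‖ * ‖w‖) * 1 := by
              apply mul_le_mul hb1 hb2 (abs_nonneg _) (by positivity)
          _ = ‖gradient ps v‖ * ‖w‖ := mul_one _
    have h2 : Integrable fun v : (EuclideanSpace ℝ (Fin n)) =>
        ps v * fderiv ℝ (fun v : (EuclideanSpace ℝ (Fin n)) => gK C σ2 (x - c • v)) v w := by
      apply (hpsInt.norm.mul_const (c * M * ‖w‖)).mono'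
      · apply Continuous.aestronglyMeasurable
        apply hps.continuous.mul
        have : (fun v : (EuclideanSpace ℝ (Fin n)) => fderiv ℝ (fun v : (EuclideanSpace ℝ (Fin n)) => gK C σ2 (x - c • v)) v w)
            = fun v : (EuclideanSpace ℝ (Fin n)) => ((-c) • GK C σ2 (x - c • v)) w := by
          funext v; rw [hfd]
        rw [this]
        have hGKw : Continuous fun v : (EuclideanSpace ℝ (Fin n)) => GK C σ2 (x - c • v) w :=
          (ContinuousLinearMap.apply ℝ ℝ w).continuous.comp ((GK_cont C σ2).comp (hAffCont x))
        simp only [ContinuousLinearMap.smul_apply, smul_eq_mul]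
        exact continuous_const.mul hGKw
      · filter_upwards with v
        rw [Real.norm_eq_abs, abs_mul, hfd]
        have hb : |((-c) • GK C σ2 (x - c • v)) w| ≤ c * M * ‖w‖ := by
          rw [ContinuousLinearMap.smul_apply, smul_eq_mul, abs_mul, abs_neg, abs_of_pos hc]
          have : |GK C σ2 (x - c • v) w| ≤ M * ‖w‖ := by
            calc |GK C σ2 (x - c • v) w| ≤ ‖GK C σ2 (x - c • v)‖ * ‖w‖ :=
                  (GK C σ2 (x - c • v)).le_opNorm w
              _ ≤ M * ‖w‖ := mul_le_mul_of_nonneg_right (hGbound _) (norm_nonneg _)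
          calc c * |GK C σ2 (x - c • v) w| ≤ c * (M * ‖w‖) :=
                mul_le_mul_of_nonneg_left this hc.le
            _ = c * M * ‖w‖ := by ring
        calc |ps v| * |((-c) • GK C σ2 (x - c • v)) w| ≤ |ps v| * (c * M * ‖w‖) :=
              mul_le_mul_of_nonneg_left hb (abs_nonneg _)
          _ = ‖ps v‖ * (c * M * ‖w‖) := by rw [Real.norm_eq_abs]
    have hdiffps : Differentiable ℝ ps := hps.differentiable one_ne_zero
    have hdiffk : Differentiable ℝ fun v : (EuclideanSpace ℝ (Fin n)) => gK C σ2 (x - c • v) := fun v =>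
      (hKv x v).differentiableAt
    have hIBP := integral_mul_fderiv_eq_neg_fderiv_mul_of_integrable
      h1 h2 (hFint x) (fun v _ => hdiffps v) (fun v _ => hdiffk v)
    -- rewrite the left-hand side of IBP
    have hL : (∫ v, ps v * fderiv ℝ (fun v : (EuclideanSpace ℝ (Fin n)) => gK C σ2 (x - c • v)) v w)
        = (-c) * ∫ v, ps v * GK C σ2 (x - c • v) w := by
      rw [← integral_const_mul]
      congr 1
      funext v
      rw [hfd]
      simp only [ContinuousLinearMap.smul_apply, smul_eq_mul]
      ring
    rw [hL] at hIBP
    have hApply : (∫ v, ps v • GK C σ2 (x - c • v)) w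
        = ∫ v, ps v * GK C σ2 (x - c • v) w := by
      rw [ContinuousLinearMap.integral_apply (hGint x) w]
      rfl
    rw [hApply]
    have hc' : c ≠ 0 := hc.ne'
    have : (-c) * ∫ v, ps v * GK C σ2 (x - c • v) w
        = - ∫ v, fderiv ℝ ps v w * gK C σ2 (x - c • v) := hIBP
    have hres : ∫ v, ps v * GK C σ2 (x - c • v) w
        = c⁻¹ * ∫ v, fderiv ℝ ps v w * gK C σ2 (x - c • v) := by
      field_simp at this ⊢
      linarith
    rw [hres]
    congr 1
    apply integral_congr_ae
    filter_upwards with v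
    ring
  -- wrap up
  have hgradq : HasGradientAt (fun x' : (EuclideanSpace ℝ (Fin n)) => ∫ v, ps v * gK C σ2 (x' - c • v))
      (Real.exp ((t - s) / 2) • ∫ v, gK C σ2 (x - c • v) • gradient ps v) x := by
    rw [hasGradientAt_iff_hasFDerivAt]
    have heq : InnerProductSpace.toDual ℝ (EuclideanSpace ℝ (Fin n))
        (Real.exp ((t - s) / 2) • ∫ v, gK C σ2 (x - c • v) • gradient ps v)
        = ∫ v, ps v • GK C σ2 (x - c • v) := by
      apply ContinuousLinearMap.ext
      intro w
      rw [InnerProductSpace.toDual_apply_apply, hibp w]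
      rw [real_inner_smul_left, hcinv]
      congr 1
      rw [real_inner_comm, ← integral_inner (𝕜 := ℝ) hIint w]
      congr 1
      funext v
      rw [real_inner_smul_right, real_inner_comm, hgradInner]
    rw [heq]
    exact HF
  constructor
  · simp only [hk']
    exact hgradq.differentiableAt
  · simp only [hk']
    exact hgradq.gradient
end

section
/- Work on a probability space (Ω, F, ℙ). Let η₀, η₁, η₂ be independent standard Gaussian real random variables. Fix real parameters μ > 0, λ > 0, σ_B > 0 and t > 0, and define X₀ = √μ · η₀, Y = X₀ + σ_B · η₁, X_t = e^{−t/2} · X₀ + √(λ(1 − e^{−t})) · η₂. Set p = λ/μ, q = μ/σ_B², and D_t = 1 + (e^t − 1) p (1 + q). Let a = e^{t/2}/D_t and b = p q (e^t − 1)/D_t. Then the normal equations hold: E[(a·X_t + b·Y − X₀) · Y] = 0 and E[(a·X_t + b·Y − X₀) · X_t] = 0. -/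
open MeasureTheory ProbabilityTheory Real

open Filter
open scoped NNReal ENNReal


lemma myint_xexp_integrable : Integrable (fun x : ℝ => x * rexp (-x ^ 2 / 2)) := by
  have h := integrable_mul_exp_neg_mul_sq (b := (1/2 : ℝ)) (by norm_num)
  simp_rw [show ∀ x : ℝ, (-(1/2 : ℝ)) * x ^ 2 = -x ^ 2 / 2 from fun x => by ring] at h
  exact h

lemma myint_x2exp_integrable : Integrable (fun x : ℝ => x ^ 2 * rexp (-x ^ 2 / 2)) := by
  have h := integrable_rpow_mul_exp_neg_mul_sq (b := (1/2 : ℝ)) (by norm_num)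
    (s := (2 : ℝ)) (by norm_num)
  simp_rw [Real.rpow_two, show ∀ x : ℝ, -(1/2 : ℝ) * x ^ 2 = -x ^ 2 / 2 from fun x => by ring] at h
  exact h

lemma myint_exp_integrable : Integrable (fun x : ℝ => rexp (-x ^ 2 / 2)) := by
  have h := integrable_exp_neg_mul_sq (b := (1/2 : ℝ)) (by norm_num)
  simp_rw [show ∀ x : ℝ, (-(1/2 : ℝ)) * x ^ 2 = -x ^ 2 / 2 from fun x => by ring] at h
  exact h

lemma myexp_tendsto_top : Tendsto (fun x : ℝ => rexp (-x ^ 2 / 2)) atTop (nhds 0) := by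
  apply Real.tendsto_exp_atBot.comp
  have h : Tendsto (fun x : ℝ => x ^ 2 / 2) atTop atTop :=
    (tendsto_pow_atTop two_ne_zero).atTop_div_const (by norm_num)
  have h2 := tendsto_neg_atTop_atBot.comp h
  simpa [Function.comp_def, neg_div] using h2

lemma myexp_tendsto_bot : Tendsto (fun x : ℝ => rexp (-x ^ 2 / 2)) atBot (nhds 0) := by
  have := myexp_tendsto_top.comp (tendsto_neg_atBot_atTop)
  simpa [Function.comp_def, neg_sq] using this

lemma myint_antideriv (f F : ℝ → ℝ) (hd : ∀ x, HasDerivAt F (f x) x)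
    (hi : Integrable f) (htop : Tendsto F atTop (nhds 0))
    (hbot : Tendsto F atBot (nhds 0)) : ∫ x, f x = 0 := by
  have h1 : ∫ x in Set.Ioi (0:ℝ), f x = 0 - F 0 :=
    MeasureTheory.integral_Ioi_of_hasDerivAt_of_tendsto' (fun x _ => hd x)
      hi.integrableOn htop
  have h2 : ∫ x in Set.Iic (0:ℝ), f x = F 0 - 0 :=
    MeasureTheory.integral_Iic_of_hasDerivAt_of_tendsto' (fun x _ => hd x)
      hi.integrableOn hbot
  rw [← intervalIntegral.integral_Iic_add_Ioi (b := (0:ℝ)) hi.integrableOn hi.integrableOn,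
    h1, h2]
  ring

lemma myhd_exp (x : ℝ) : HasDerivAt (fun x : ℝ => rexp (-x ^ 2 / 2)) (-x * rexp (-x ^ 2 / 2)) x := by
  have h1 : HasDerivAt (fun x : ℝ => -x ^ 2 / 2) (-x) x := by
    have := ((hasDerivAt_pow 2 x).neg.div_const 2)
    refine this.congr_deriv ?_
    push_cast
    ring
  simpa [mul_comm] using h1.exp

lemma myint_xexp : ∫ x : ℝ, x * rexp (-x ^ 2 / 2) = 0 := by
  refine myint_antideriv _ (fun x => -rexp (-x ^ 2 / 2)) (fun x => ?_)
    myint_xexp_integrable (by simpa using myexp_tendsto_top.neg)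
    (by simpa using myexp_tendsto_bot.neg)
  simpa using (myhd_exp x).fun_neg

lemma myGtop : Tendsto (fun x : ℝ => x * rexp (-x ^ 2 / 2)) atTop (nhds 0) := by
  have h := rpow_mul_exp_neg_mul_sq_isLittleO_exp_neg (b := (1/2 : ℝ)) (by norm_num) (1 : ℝ)
  have hlin : Tendsto (fun x : ℝ => -(1/2 : ℝ) * x) atTop atBot := by
    apply Filter.Tendsto.const_mul_atTop_of_neg (by norm_num) tendsto_id
  have h0 := h.trans_tendsto (Real.tendsto_exp_atBot.comp hlin)
  refine h0.congr' ?_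
  filter_upwards [eventually_gt_atTop (0:ℝ)] with x hx
  rw [Real.rpow_one]
  ring_nf

lemma myint_x2exp : ∫ x : ℝ, x ^ 2 * rexp (-x ^ 2 / 2) = Real.sqrt (2 * π) := by
  have key : ∫ x : ℝ, (x ^ 2 * rexp (-x ^ 2 / 2) - rexp (-x ^ 2 / 2)) = 0 := by
    refine myint_antideriv _ (fun x => -x * rexp (-x ^ 2 / 2)) (fun x => ?_)
      (myint_x2exp_integrable.sub myint_exp_integrable) ?_ ?_
    · have := ((hasDerivAt_id x).neg.mul (myhd_exp x))
      refine this.congr_deriv ?_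
      simp only [Pi.neg_apply, id_eq]
      ring
    · simpa using myGtop.neg
    · have := myGtop.neg.comp tendsto_neg_atBot_atTop
      simp only [Function.comp_def, neg_sq, neg_neg, neg_mul] at this ⊢
      simpa using this.neg
  have := MeasureTheory.integral_sub myint_x2exp_integrable myint_exp_integrable
  rw [key] at this
  have hexp : ∫ x : ℝ, rexp (-x ^ 2 / 2) = Real.sqrt (2 * π) := by
    have h := integral_gaussian (1/2 : ℝ)
    simp_rw [show ∀ x : ℝ, (-(1/2 : ℝ)) * x ^ 2 = -x ^ 2 / 2 from fun x => by ring] at h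
    rw [h, show π / (1/2 : ℝ) = 2 * π by ring]
  linarith [this]

lemma mypdf_eq (x : ℝ) :
    gaussianPDFReal 0 1 x = (Real.sqrt (2 * π))⁻¹ * rexp (-x ^ 2 / 2) := by
  simp [gaussianPDFReal]

lemma mypdf_nonneg (x : ℝ) : 0 ≤ (Real.sqrt (2 * π))⁻¹ * rexp (-x ^ 2 / 2) := by positivity

lemma mypdf_meas : Measurable (fun x : ℝ => (Real.sqrt (2 * π))⁻¹ * rexp (-x ^ 2 / 2)) := by
  fun_prop

lemma mygauss_integral (g : ℝ → ℝ) :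
    ∫ x, g x ∂(gaussianReal 0 1) =
      ∫ x, ((Real.sqrt (2 * π))⁻¹ * rexp (-x ^ 2 / 2)) * g x := by
  rw [gaussianReal_of_var_ne_zero 0 one_ne_zero]
  have hd : (gaussianPDF 0 1)
      = fun x => (((((Real.sqrt (2 * π))⁻¹ * rexp (-x ^ 2 / 2)).toNNReal : ℝ≥0)) : ℝ≥0∞) := by
    funext x
    rw [gaussianPDF, mypdf_eq, ENNReal.ofReal]
  rw [hd, integral_withDensity_eq_integral_smul (by fun_prop) g]
  congr 1
  funext x
  rw [NNReal.smul_def, Real.coe_toNNReal _ (mypdf_nonneg x), smul_eq_mul]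

lemma mygauss_integrable_iff (g : ℝ → ℝ) :
    Integrable g (gaussianReal 0 1) ↔
      Integrable (fun x => g x * ((Real.sqrt (2 * π))⁻¹ * rexp (-x ^ 2 / 2))) := by
  rw [gaussianReal_of_var_ne_zero 0 one_ne_zero]
  have hd : (gaussianPDF 0 1)
      = fun x => ENNReal.ofReal ((Real.sqrt (2 * π))⁻¹ * rexp (-x ^ 2 / 2)) := by
    funext x; rw [gaussianPDF, mypdf_eq]
  rw [hd, integrable_withDensity_iff (by fun_prop) (ae_of_all _ fun x => ENNReal.ofReal_lt_top)]
  simp_rw [ENNReal.toReal_ofReal (mypdf_nonneg _)]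

lemma myg_int_id : Integrable (fun x : ℝ => x) (gaussianReal 0 1) := by
  rw [mygauss_integrable_iff]
  have := myint_xexp_integrable.const_mul (Real.sqrt (2 * π))⁻¹
  apply this.congr
  filter_upwards with x
  ring

lemma myg_int_sq : Integrable (fun x : ℝ => x ^ 2) (gaussianReal 0 1) := by
  rw [mygauss_integrable_iff]
  have := myint_x2exp_integrable.const_mul (Real.sqrt (2 * π))⁻¹
  apply this.congr
  filter_upwards with x
  ring

lemma myg_mean : ∫ x, x ∂(gaussianReal 0 1) = 0 := by
  rw [mygauss_integral]
  simp_rw [show ∀ x : ℝ, ((Real.sqrt (2 * π))⁻¹ * rexp (-x ^ 2 / 2)) * x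
      = (Real.sqrt (2 * π))⁻¹ * (x * rexp (-x ^ 2 / 2)) from fun x => by ring]
  rw [integral_const_mul, myint_xexp, mul_zero]

lemma myg_m2 : ∫ x, x ^ 2 ∂(gaussianReal 0 1) = 1 := by
  rw [mygauss_integral]
  simp_rw [show ∀ x : ℝ, ((Real.sqrt (2 * π))⁻¹ * rexp (-x ^ 2 / 2)) * x ^ 2
      = (Real.sqrt (2 * π))⁻¹ * (x ^ 2 * rexp (-x ^ 2 / 2)) from fun x => by ring]
  rw [integral_const_mul, myint_x2exp, inv_mul_cancel₀ (by positivity)]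


/-- Normal equations characterizing `a X_t + b Y` as the `L²` projection of `X₀`
onto the span of `(X_t, Y)` (Appendix B). -/
theorem normal_equations {Ω : Type*} [MeasurableSpace Ω]
    (P : Measure Ω) [IsProbabilityMeasure P]
    (η₀ η₁ η₂ : Ω → ℝ)
    (hη₀ : Measurable η₀) (hη₁ : Measurable η₁) (hη₂ : Measurable η₂)
    (hind : iIndepFun ![η₀, η₁, η₂] P)
    (hg₀ : P.map η₀ = gaussianReal 0 1) (hg₁ : P.map η₁ = gaussianReal 0 1)
    (hg₂ : P.map η₂ = gaussianReal 0 1)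
    (μ lam σB t : ℝ) (hμ : 0 < μ) (hlam : 0 < lam) (hσB : 0 < σB) (ht : 0 < t)
    (X₀ Y Xt : Ω → ℝ)
    (hX₀ : X₀ = fun ω => Real.sqrt μ * η₀ ω)
    (hY : Y = fun ω => X₀ ω + σB * η₁ ω)
    (hXt : Xt = fun ω =>
      Real.exp (-t / 2) * X₀ ω + Real.sqrt (lam * (1 - Real.exp (-t))) * η₂ ω)
    (p q Dt a b : ℝ)
    (hp : p = lam / μ) (hq : q = μ / σB ^ 2)
    (hDt : Dt = 1 + (Real.exp t - 1) * p * (1 + q))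
    (ha : a = Real.exp (t / 2) / Dt) (hb : b = p * q * (Real.exp t - 1) / Dt) :
    (∫ ω, (a * Xt ω + b * Y ω - X₀ ω) * Y ω ∂P) = 0 ∧
    (∫ ω, (a * Xt ω + b * Y ω - X₀ ω) * Xt ω ∂P) = 0 := by
  -- moments of each ηᵢ
  have pack : ∀ η : Ω → ℝ, Measurable η → P.map η = gaussianReal 0 1 →
      Integrable η P ∧ Integrable (fun ω => η ω * η ω) P ∧
        (∫ ω, η ω ∂P) = 0 ∧ (∫ ω, η ω * η ω ∂P) = 1 := by
    intro η hm hg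
    have hint1 : Integrable (fun x : ℝ => x) (P.map η) := hg ▸ myg_int_id
    have hint2 : Integrable (fun x : ℝ => x ^ 2) (P.map η) := hg ▸ myg_int_sq
    have h1 : Integrable η P :=
      (integrable_map_measure aestronglyMeasurable_id hm.aemeasurable).mp hint1
    have h2 : Integrable (fun ω => η ω * η ω) P := by
      have := (integrable_map_measure (by fun_prop) hm.aemeasurable).mp hint2
      simpa [Function.comp_def, pow_two] using this
    have h3 : (∫ ω, η ω ∂P) = 0 := by
      have := integral_map (μ := P) (φ := η) (f := fun x : ℝ => x) hm.aemeasurable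
        aestronglyMeasurable_id
      rw [← this, hg, myg_mean]
    have h4 : (∫ ω, η ω * η ω ∂P) = 1 := by
      have := integral_map (μ := P) (φ := η) (f := fun x : ℝ => x ^ 2) hm.aemeasurable
        (by fun_prop)
      simp_rw [pow_two] at this
      rw [← this, hg]
      simpa [pow_two] using myg_m2
    exact ⟨h1, h2, h3, h4⟩
  obtain ⟨i₀, s₀, m₀, v₀⟩ := pack η₀ hη₀ hg₀
  obtain ⟨i₁, s₁, m₁, v₁⟩ := pack η₁ hη₁ hg₁
  obtain ⟨i₂, s₂, m₂, v₂⟩ := pack η₂ hη₂ hg₂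
  -- independence of pairs
  have h01 : IndepFun η₀ η₁ P := by
    simpa using hind.indepFun (show (0 : Fin 3) ≠ 1 by decide)
  have h02 : IndepFun η₀ η₂ P := by
    simpa using hind.indepFun (show (0 : Fin 3) ≠ 2 by decide)
  have h12 : IndepFun η₁ η₂ P := by
    simpa using hind.indepFun (show (1 : Fin 3) ≠ 2 by decide)
  have c01 : (∫ ω, η₀ ω * η₁ ω ∂P) = 0 := by
    have h := h01.integral_fun_mul_eq_mul_integral hη₀.aestronglyMeasurable hη₁.aestronglyMeasurable
    rw [m₀, m₁, mul_zero] at h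
    exact h
  have c02 : (∫ ω, η₀ ω * η₂ ω ∂P) = 0 := by
    have h := h02.integral_fun_mul_eq_mul_integral hη₀.aestronglyMeasurable hη₂.aestronglyMeasurable
    rw [m₀, m₂, mul_zero] at h
    exact h
  have c12 : (∫ ω, η₁ ω * η₂ ω ∂P) = 0 := by
    have h := h12.integral_fun_mul_eq_mul_integral hη₁.aestronglyMeasurable hη₂.aestronglyMeasurable
    rw [m₁, m₂, mul_zero] at h
    exact h
  have p01 : Integrable (fun ω => η₀ ω * η₁ ω) P := h01.integrable_mul i₀ i₁
  have p02 : Integrable (fun ω => η₀ ω * η₂ ω) P := h02.integrable_mul i₀ i₂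
  have p12 : Integrable (fun ω => η₁ ω * η₂ ω) P := h12.integrable_mul i₁ i₂
  -- bilinear computation
  have key : ∀ c₀ c₁ c₂ d₀ d₁ d₂ : ℝ,
      (∫ ω, (c₀ * η₀ ω + c₁ * η₁ ω + c₂ * η₂ ω) *
        (d₀ * η₀ ω + d₁ * η₁ ω + d₂ * η₂ ω) ∂P) = c₀ * d₀ + c₁ * d₁ + c₂ * d₂ := by
    intro c₀ c₁ c₂ d₀ d₁ d₂
    have hsum : (fun ω => (c₀ * η₀ ω + c₁ * η₁ ω + c₂ * η₂ ω) *
        (d₀ * η₀ ω + d₁ * η₁ ω + d₂ * η₂ ω))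
        = fun ω => (c₀ * d₀) * (η₀ ω * η₀ ω) + ((c₁ * d₁) * (η₁ ω * η₁ ω) +
          ((c₂ * d₂) * (η₂ ω * η₂ ω) + ((c₀ * d₁ + c₁ * d₀) * (η₀ ω * η₁ ω) +
          ((c₀ * d₂ + c₂ * d₀) * (η₀ ω * η₂ ω) +
            (c₁ * d₂ + c₂ * d₁) * (η₁ ω * η₂ ω))))) := by
      funext ω; ring
    have q1 : Integrable (fun ω => (c₀ * d₀) * (η₀ ω * η₀ ω)) P := s₀.const_mul _
    have q2 : Integrable (fun ω => (c₁ * d₁) * (η₁ ω * η₁ ω)) P := s₁.const_mul _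
    have q3 : Integrable (fun ω => (c₂ * d₂) * (η₂ ω * η₂ ω)) P := s₂.const_mul _
    have q4 : Integrable (fun ω => (c₀ * d₁ + c₁ * d₀) * (η₀ ω * η₁ ω)) P := p01.const_mul _
    have q5 : Integrable (fun ω => (c₀ * d₂ + c₂ * d₀) * (η₀ ω * η₂ ω)) P := p02.const_mul _
    have q6 : Integrable (fun ω => (c₁ * d₂ + c₂ * d₁) * (η₁ ω * η₂ ω)) P := p12.const_mul _
    have t6 := q6
    have t5 : Integrable (fun ω => (c₀ * d₂ + c₂ * d₀) * (η₀ ω * η₂ ω)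
        + (c₁ * d₂ + c₂ * d₁) * (η₁ ω * η₂ ω)) P := q5.add q6
    have t4 : Integrable (fun ω => (c₀ * d₁ + c₁ * d₀) * (η₀ ω * η₁ ω)
        + ((c₀ * d₂ + c₂ * d₀) * (η₀ ω * η₂ ω)
        + (c₁ * d₂ + c₂ * d₁) * (η₁ ω * η₂ ω))) P := q4.add t5
    have t3 : Integrable (fun ω => (c₂ * d₂) * (η₂ ω * η₂ ω)
        + ((c₀ * d₁ + c₁ * d₀) * (η₀ ω * η₁ ω)
        + ((c₀ * d₂ + c₂ * d₀) * (η₀ ω * η₂ ω)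
        + (c₁ * d₂ + c₂ * d₁) * (η₁ ω * η₂ ω)))) P := q3.add t4
    have t2 : Integrable (fun ω => (c₁ * d₁) * (η₁ ω * η₁ ω)
        + ((c₂ * d₂) * (η₂ ω * η₂ ω)
        + ((c₀ * d₁ + c₁ * d₀) * (η₀ ω * η₁ ω)
        + ((c₀ * d₂ + c₂ * d₀) * (η₀ ω * η₂ ω)
        + (c₁ * d₂ + c₂ * d₁) * (η₁ ω * η₂ ω))))) P := q2.add t3
    rw [hsum, integral_add q1 t2, integral_add q2 t3, integral_add q3 t4,
      integral_add q4 t5, integral_add q5 t6,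
      integral_const_mul, integral_const_mul, integral_const_mul, integral_const_mul,
      integral_const_mul, integral_const_mul, v₀, v₁, v₂, c01, c02, c12]
    ring
  subst hX₀ hY hXt
  -- scalar facts
  set s := Real.sqrt μ with hs
  set r := Real.sqrt (lam * (1 - Real.exp (-t))) with hr
  have hs2 : s * s = μ := Real.mul_self_sqrt hμ.le
  have hexpt : Real.exp (-t) < 1 := by
    rw [Real.exp_lt_one_iff]; linarith
  have hr2 : r * r = lam * (1 - Real.exp (-t)) := by
    apply Real.mul_self_sqrt
    nlinarith
  set u := Real.exp (t / 2) with hu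
  have hu0 : u ≠ 0 := (Real.exp_pos _).ne'
  have hE : Real.exp t = u * u := by
    rw [hu, ← Real.exp_add]; norm_num
  have hE2 : Real.exp (-t / 2) = u⁻¹ := by
    rw [hu, ← Real.exp_neg]; congr 1; ring
  have hEn : Real.exp (-t) = (u * u)⁻¹ := by
    rw [← hE, ← Real.exp_neg]
  have hexp1 : 1 < Real.exp t := by
    rw [← Real.exp_zero]; exact Real.exp_lt_exp.mpr ht
  have hp0 : 0 < p := by rw [hp]; positivity
  have hq0 : 0 < q := by rw [hq]; positivity
  have hDt0 : Dt ≠ 0 := by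
    have h1 : 0 ≤ (Real.exp t - 1) * p * (1 + q) :=
      mul_nonneg (mul_nonneg (by linarith) hp0.le) (by linarith)
    have : 0 < Dt := by rw [hDt]; linarith
    exact this.ne'
  have hDσ : Dt * σB ^ 2 ≠ 0 := mul_ne_zero hDt0 (pow_ne_zero 2 hσB.ne')
  have R1 : a * Dt = u := by rw [ha]; field_simp
  have R2 : b * Dt * σB ^ 2 = lam * (u * u - 1) := by
    rw [hb, hp, hq, hE]
    field_simp
  have R3 : Dt * (μ * σB ^ 2) = μ * σB ^ 2 + (u * u - 1) * lam * (σB ^ 2 + μ) := by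
    rw [hDt, hp, hq, hE]
    field_simp
  have R4 : Real.exp (-t / 2) * u = 1 := by rw [hE2]; exact inv_mul_cancel₀ hu0
  have R6 : Real.exp (-t / 2) * Real.exp (-t / 2) = Real.exp (-t) := by
    rw [← Real.exp_add]; ring_nf
  constructor
  · have h := key (a * (Real.exp (-t / 2) * s) + b * s - s) (b * σB) (a * r) s σB 0
    calc (∫ ω, (a * (Real.exp (-t / 2) * (s * η₀ ω) + r * η₂ ω)
          + b * (s * η₀ ω + σB * η₁ ω) - s * η₀ ω) * (s * η₀ ω + σB * η₁ ω) ∂P)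
        = ∫ ω, ((a * (Real.exp (-t / 2) * s) + b * s - s) * η₀ ω + (b * σB) * η₁ ω
            + (a * r) * η₂ ω) * (s * η₀ ω + σB * η₁ ω + (0 : ℝ) * η₂ ω) ∂P := by
          congr 1; funext ω; ring
      _ = (a * (Real.exp (-t / 2) * s) + b * s - s) * s + (b * σB) * σB + (a * r) * 0 :=
          key _ _ _ _ _ _
      _ = (a * Real.exp (-t / 2) + b - 1) * μ + b * σB ^ 2 := by
          rw [← hs2]; ring
      _ = 0 := by
          have H : ((a * Real.exp (-t / 2) + b - 1) * μ + b * σB ^ 2) * (Dt * σB ^ 2) = 0 := by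
            linear_combination (Real.exp (-t / 2) * μ * σB ^ 2) * R1 + (μ + σB ^ 2) * R2
              - R3 + (μ * σB ^ 2) * R4
          exact (mul_eq_zero.mp H).resolve_right hDσ
  · have h := key (a * (Real.exp (-t / 2) * s) + b * s - s) (b * σB) (a * r)
      (Real.exp (-t / 2) * s) 0 r
    calc (∫ ω, (a * (Real.exp (-t / 2) * (s * η₀ ω) + r * η₂ ω)
          + b * (s * η₀ ω + σB * η₁ ω) - s * η₀ ω)
          * (Real.exp (-t / 2) * (s * η₀ ω) + r * η₂ ω) ∂P)
        = ∫ ω, ((a * (Real.exp (-t / 2) * s) + b * s - s) * η₀ ω + (b * σB) * η₁ ω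
            + (a * r) * η₂ ω)
            * ((Real.exp (-t / 2) * s) * η₀ ω + (0 : ℝ) * η₁ ω + r * η₂ ω) ∂P := by
          congr 1; funext ω; ring
      _ = (a * (Real.exp (-t / 2) * s) + b * s - s) * (Real.exp (-t / 2) * s)
          + (b * σB) * 0 + (a * r) * r := key _ _ _ _ _ _
      _ = (a * Real.exp (-t / 2) + b - 1) * Real.exp (-t / 2) * μ
          + a * (lam * (1 - Real.exp (-t))) := by
          rw [← hs2, ← hr2]; ring
      _ = 0 := by
          have H : ((a * Real.exp (-t / 2) + b - 1) * Real.exp (-t / 2) * μ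
              + a * (lam * (1 - Real.exp (-t)))) * (Dt * σB ^ 2) = 0 := by
            linear_combination (Real.exp (-t / 2) * Real.exp (-t / 2) * μ * σB ^ 2
                + lam * σB ^ 2 * (1 - Real.exp (-t))) * R1
              + (Real.exp (-t / 2) * μ) * R2 - Real.exp (-t / 2) * R3
              + (Real.exp (-t / 2) * μ * σB ^ 2 - lam * σB ^ 2 * u
                - lam * σB ^ 2 * Real.exp (-t / 2)) * R4
              + (lam * σB ^ 2 * u) * R6
          exact (mul_eq_zero.mp H).resolve_right hDσ
end

section
/- Fix real parameters μ > 0, λ > 0, q ≥ 0, y ∈ ℝ, T > 0, and set p = λ/μ. Define the drift coefficients μˣ(s) = 1/2 − e^s p (1+q) / (1 + (e^s − 1) p (1+q)) and μʸ(s) = e^{s/2} p q / (1 + (e^s − 1) p (1+q)) for s ∈ ℝ, s ≥ 0 (the denominators are ≥ 1). Suppose m : ℝ → ℝ satisfies m(0) = z̄₀ and, for every u ∈ [0, T], m has derivative μˣ(T − u)·m(u) + μʸ(T − u)·y at u. Then, with D_T = 1 + (e^T − 1) p (1+q), m(T) = z̄₀ e^{T/2}/D_T + (y q/(1+q)) (1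 − 1/D_T). -/
open Real

/-- Mean dynamics of one mode of the reverse-time SDE (Lemma 2): the solution of
the linear ODE `m' = μˣ(T−u) m + μʸ(T−u) y` with `m(0) = z̄₀` satisfies
`m(T) = z̄₀ e^{T/2}/D_T + (y q/(1+q))(1 − 1/D_T)`. -/
theorem reverse_sde_mean_dynamics (μ lam q y T : ℝ)
    (hμ : 0 < μ) (hlam : 0 < lam) (hq : 0 ≤ q) (hT : 0 < T)
    (p : ℝ) (hp : p = lam / μ)
    (z₀ : ℝ) (m : ℝ → ℝ) (hm0 : m 0 = z₀)
    (hderiv : ∀ u ∈ Set.Icc (0 : ℝ) T,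
      HasDerivAt m
        ((1 / 2 - Real.exp (T - u) * p * (1 + q) /
            (1 + (Real.exp (T - u) - 1) * p * (1 + q))) * m u +
          (Real.exp ((T - u) / 2) * p * q /
            (1 + (Real.exp (T - u) - 1) * p * (1 + q))) * y) u) :
    m T = z₀ * Real.exp (T / 2) / (1 + (Real.exp T - 1) * p * (1 + q))
      + y * q / (1 + q) * (1 - 1 / (1 + (Real.exp T - 1) * p * (1 + q))) := by
  have hp0 : 0 < p := by rw [hp]; exact div_pos hlam hμ
  have hq1 : 0 < 1 + q := by linarith
  have hDpos : ∀ s : ℝ, 0 ≤ s → 0 < 1 + (Real.exp s - 1) * p * (1 + q) := by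
    intro s hs
    have h1 : 1 ≤ Real.exp s := Real.one_le_exp hs
    have h2 : 0 ≤ (Real.exp s - 1) * p * (1 + q) :=
      mul_nonneg (mul_nonneg (by linarith) hp0.le) hq1.le
    linarith
  set c : ℝ := Real.exp (-(T/2)) * y * q / (1 + q) with hc
  set g : ℝ → ℝ := fun u =>
    (Real.exp (-(u/2)) * m u - c) / (1 + (Real.exp (T - u) - 1) * p * (1 + q)) with hg
  have hgd : ∀ u ∈ Set.Icc (0:ℝ) T, HasDerivAt g 0 u := by
    intro u hu
    obtain ⟨hu0, huT⟩ := hu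
    have hDu : 0 < 1 + (Real.exp (T - u) - 1) * p * (1 + q) := hDpos _ (by linarith)
    have hm' := hderiv u ⟨hu0, huT⟩
    have hexp : HasDerivAt (fun u : ℝ => Real.exp (-(u/2)))
        (Real.exp (-(u/2)) * (-(1/2))) u := by
      have h1 : HasDerivAt (fun u : ℝ => -(u/2)) (-(1/2)) u := by
        exact ((hasDerivAt_id u).div_const 2).neg
      exact (Real.hasDerivAt_exp (-(u/2))).comp u h1
    have hN : HasDerivAt (fun u => Real.exp (-(u/2)) * m u - c)
        (Real.exp (-(u/2)) * (-(1/2)) * m u + Real.exp (-(u/2)) *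
          ((1 / 2 - Real.exp (T - u) * p * (1 + q) /
            (1 + (Real.exp (T - u) - 1) * p * (1 + q))) * m u +
          (Real.exp ((T - u) / 2) * p * q /
            (1 + (Real.exp (T - u) - 1) * p * (1 + q))) * y)) u :=
      (hexp.mul hm').sub_const c
    have hDd : HasDerivAt (fun u : ℝ => 1 + (Real.exp (T - u) - 1) * p * (1 + q))
        (-Real.exp (T - u) * p * (1 + q)) u := by
      have h1 : HasDerivAt (fun u : ℝ => T - u) (-1) u := by
        simpa using (hasDerivAt_id u).const_sub T
      have h3 : HasDerivAt (fun u : ℝ => Real.exp (T - u)) (Real.exp (T - u) * (-1)) u :=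
        (Real.hasDerivAt_exp (T - u)).comp u h1
      have := (((h3.sub_const 1).mul_const p).mul_const (1 + q)).const_add 1
      exact this.congr_deriv (by ring)
    have hdiv := hN.div hDd (ne_of_gt hDu)
    refine hdiv.congr_deriv ?_
    rw [div_eq_zero_iff]
    left
    have hHrw : Real.exp (-(T/2))
        = Real.exp (-(u/2)) * Real.exp ((T - u)/2) / Real.exp (T - u) := by
      rw [eq_div_iff (Real.exp_ne_zero _), ← Real.exp_add, ← Real.exp_add]
      ring_nf
    rw [hc, hHrw]
    set D := 1 + (Real.exp (T - u) - 1) * p * (1 + q) with hD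
    field_simp [ne_of_gt hDu]
    rw [hD]
    ring
  have hcont : ContinuousOn g (Set.Icc 0 T) := fun u hu =>
    ((hgd u hu).continuousAt).continuousWithinAt
  have hconst := constant_of_has_deriv_right_zero hcont
    (fun u hu => ((hgd u (Set.mem_Icc_of_Ico hu)).hasDerivWithinAt))
  have hgT : g T = g 0 := hconst T (Set.right_mem_Icc.2 (le_of_lt hT))
  have hD0 : (1 + (Real.exp (T - T) - 1) * p * (1 + q)) = 1 := by simp
  have hDT : 0 < 1 + (Real.exp T - 1) * p * (1 + q) := hDpos T (le_of_lt hT)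
  have hgTval : g T = Real.exp (-(T/2)) * m T - c := by
    simp only [hg, hD0, div_one]
  have hg0val : g 0 = (m 0 - c) / (1 + (Real.exp T - 1) * p * (1 + q)) := by
    simp [hg]
  rw [hgTval, hg0val, hm0] at hgT
  have hDT' : (1 + (Real.exp T - 1) * p * (1 + q)) ≠ 0 := ne_of_gt hDT
  have h2 : Real.exp (T/2) * Real.exp (-(T/2)) = 1 := by
    rw [← Real.exp_add]; simp
  have h1 : Real.exp (T/2) * (Real.exp (-(T/2)) * m T - c)
      = Real.exp (T/2) * ((z₀ - c) / (1 + (Real.exp T - 1) * p * (1 + q))) := by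
    rw [hgT]
  have hmT : m T = Real.exp (T/2) *
      ((z₀ - c) / (1 + (Real.exp T - 1) * p * (1 + q)) + c) := by
    linear_combination h1 - m T * h2
  rw [hmT, hc, Real.exp_neg]
  field_simp
  ring
end

section
/- Fix real parameters μ > 0, λ > 0, q ≥ 0, T > 0, and set p = λ/μ. Define μˣ(s) = 1/2 − e^s p (1+q) / (1 + (e^s − 1) p (1+q)) for s ∈ ℝ, s ≥ 0 (the denominator is ≥ 1). Suppose Σ : ℝ → ℝ satisfies Σ(0) = Σ₀ and, for every u ∈ [0, T], Σ has derivative 2 μˣ(T − u)·Σ(u) + λ at u. Then, with D_T = 1 + (e^T − 1) p (1+q), Σ(T) = Σ₀ e^T / D_T² + (μ/(1+q)) (1 − 1/D_T). -/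
set_option maxHeartbeats 1000000

open Real

/-- Variance dynamics of one mode of the reverse-time SDE (Lemma 2): the solution
of the linear ODE `Σ' = 2 μˣ(T−u) Σ + λ` with `Σ(0) = Sig₀` satisfies
`Σ(T) = Sig₀ e^T/D_T² + (μ/(1+q))(1 − 1/D_T)`. -/
theorem reverse_sde_variance_dynamics (μ lam q T : ℝ)
    (hμ : 0 < μ) (hlam : 0 < lam) (hq : 0 ≤ q) (hT : 0 < T)
    (p : ℝ) (hp : p = lam / μ)
    (Sig₀ : ℝ) (V : ℝ → ℝ) (hV0 : V 0 = Sig₀)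
    (hderiv : ∀ u ∈ Set.Icc (0 : ℝ) T,
      HasDerivAt V
        (2 * (1 / 2 - Real.exp (T - u) * p * (1 + q) /
            (1 + (Real.exp (T - u) - 1) * p * (1 + q))) * V u + lam) u) :
    V T = Sig₀ * Real.exp T / (1 + (Real.exp T - 1) * p * (1 + q)) ^ 2
      + μ / (1 + q) * (1 - 1 / (1 + (Real.exp T - 1) * p * (1 + q))) := by
  have h1q : (0 : ℝ) < 1 + q := by linarith
  have hp0 : 0 < p := by rw [hp]; positivity
  have hl : lam = p * μ := by rw [hp]; field_simp
  have hDT1 : (1 : ℝ) ≤ 1 + (Real.exp T - 1) * p * (1 + q) := by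
    have h0 : 0 ≤ (Real.exp T - 1) * p * (1 + q) :=
      mul_nonneg (mul_nonneg (sub_nonneg.2 (Real.one_le_exp hT.le)) hp0.le) h1q.le
    linarith
  have hDT0 : (1 + (Real.exp T - 1) * p * (1 + q)) ≠ 0 := by linarith
  -- the explicit solution, in two pieces
  set W1 : ℝ → ℝ := fun u =>
    Sig₀ * Real.exp u * (1 + (Real.exp (T - u) - 1) * p * (1 + q)) ^ 2 /
        (1 + (Real.exp T - 1) * p * (1 + q)) ^ 2 with hW1def
  set W2 : ℝ → ℝ := fun u =>
    μ / (1 + q) * (Real.exp u / Real.exp T) *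
        ((1 + (Real.exp (T - u) - 1) * p * (1 + q))
          - (1 + (Real.exp (T - u) - 1) * p * (1 + q)) ^ 2 /
              (1 + (Real.exp T - 1) * p * (1 + q))) with hW2def
  set W : ℝ → ℝ := fun u => W1 u + W2 u with hWdef
  -- derivative of the inner function
  have hdd : ∀ u : ℝ, HasDerivAt (fun u => 1 + (Real.exp (T - u) - 1) * p * (1 + q))
      (Real.exp (T - u) * (-1) * p * (1 + q)) u := by
    intro u
    have h1 : HasDerivAt (fun u : ℝ => T - u) (-1) u := (hasDerivAt_id u).const_sub T
    exact ((((Real.hasDerivAt_exp (T - u)).comp u h1).sub_const 1).mul_const p).mul_const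
      (1 + q) |>.const_add 1
  have hdpos : ∀ u ∈ Set.Icc (0 : ℝ) T,
      (1 : ℝ) ≤ 1 + (Real.exp (T - u) - 1) * p * (1 + q) := by
    intro u hu
    have h0 : 0 ≤ (Real.exp (T - u) - 1) * p * (1 + q) :=
      mul_nonneg (mul_nonneg (sub_nonneg.2
        (Real.one_le_exp (by linarith [hu.2] : (0:ℝ) ≤ T - u))) hp0.le) h1q.le
    linarith
  -- the ODE satisfied by W
  have hWd : ∀ u ∈ Set.Icc (0 : ℝ) T, HasDerivAt W
      (2 * (1 / 2 - Real.exp (T - u) * p * (1 + q) /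
          (1 + (Real.exp (T - u) - 1) * p * (1 + q))) * W u + lam) u := by
    intro u hu
    have hd1 := hdpos u hu
    have hdne : (1 + (Real.exp (T - u) - 1) * p * (1 + q)) ≠ 0 := by linarith
    have hW1d : HasDerivAt W1
        (2 * (1 / 2 - Real.exp (T - u) * p * (1 + q) /
          (1 + (Real.exp (T - u) - 1) * p * (1 + q))) * W1 u) u := by
      have h := (((Real.hasDerivAt_exp u).const_mul Sig₀).mul ((hdd u).pow 2)).div_const
        ((1 + (Real.exp T - 1) * p * (1 + q)) ^ 2)
      convert h using 1
      iterate 3 rfl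
      simp only [hW1def, Pi.pow_apply, Pi.mul_apply, Pi.sub_apply, Pi.div_apply, Nat.cast_ofNat, Nat.add_one_sub_one, pow_one]
      have hdne2 : 1 + p * (1 + q) * (Real.exp (T - u) - 1) ≠ 0 := by linarith
      field_simp
      ring
    have hW2d : HasDerivAt W2
        (2 * (1 / 2 - Real.exp (T - u) * p * (1 + q) /
          (1 + (Real.exp (T - u) - 1) * p * (1 + q))) * W2 u + lam) u := by
      have h := (((Real.hasDerivAt_exp u).div_const (Real.exp T)).const_mul (μ / (1 + q))).mul
        ((hdd u).sub (((hdd u).pow 2).div_const (1 + (Real.exp T - 1) * p * (1 + q))))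
      convert h using 1
      iterate 3 rfl
      simp only [hW2def, Pi.pow_apply, Pi.mul_apply, Pi.sub_apply, Pi.div_apply, Nat.cast_ofNat, Nat.add_one_sub_one, pow_one]
      have hB : Real.exp T = Real.exp (T - u) * Real.exp u := by
        rw [← Real.exp_add]; ring_nf
      have hDT0' := hDT0
      rw [hB] at hDT0' ⊢
      rw [hl]
      have hdne2 : 1 + p * (1 + q) * (Real.exp (T - u) - 1) ≠ 0 := by linarith
      have hDT2 : 1 + p * (1 + q) * (Real.exp (T - u) * Real.exp u - 1) ≠ 0 := by
        intro h; apply hDT0'; linarith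
      field_simp
      ring
    have h := hW1d.add hW2d
    convert h using 1
    iterate 3 rfl
    simp only [hWdef]
    ring
  -- the ratio to the integrating factor is constant
  have hG : ∀ u ∈ Set.Icc (0 : ℝ) T,
      HasDerivAt (fun u => (V u - W u) * Real.exp (-u) /
        (1 + (Real.exp (T - u) - 1) * p * (1 + q)) ^ 2) 0 u := by
    intro u hu
    have hd1 := hdpos u hu
    have hdne : (1 + (Real.exp (T - u) - 1) * p * (1 + q)) ≠ 0 := by linarith
    have hexpneg : HasDerivAt (fun x : ℝ => Real.exp (-x)) (Real.exp (-u) * (-1)) u :=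
      HasDerivAt.comp u (Real.hasDerivAt_exp (-u)) (hasDerivAt_neg u)
    have hcomb := (((hderiv u hu).sub (hWd u hu)).mul hexpneg).div ((hdd u).pow 2)
      (pow_ne_zero 2 hdne)
    convert hcomb using 1
    iterate 3 rfl
    rw [eq_comm, div_eq_zero_iff]
    left
    simp only [Pi.pow_apply, Pi.mul_apply, Pi.sub_apply, Pi.div_apply, Nat.cast_ofNat, Nat.add_one_sub_one, pow_one]
    have hdne2 : 1 + p * (1 + q) * (Real.exp (T - u) - 1) ≠ 0 := by linarith
    field_simp
    ring
  have hcont : ContinuousOn (fun u => (V u - W u) * Real.exp (-u) /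
      (1 + (Real.exp (T - u) - 1) * p * (1 + q)) ^ 2) (Set.Icc 0 T) := by
    intro u hu
    exact (hG u hu).continuousAt.continuousWithinAt
  have hconst := constant_of_has_deriv_right_zero hcont
    (fun x hx => ((hG x (Set.mem_Icc_of_Ico hx)).hasDerivWithinAt))
    T (Set.right_mem_Icc.2 hT.le)
  -- evaluate at the two endpoints
  have hW0 : W 0 = Sig₀ := by
    simp only [hWdef, hW1def, hW2def, sub_zero, Real.exp_zero]
    field_simp
    ring
  have hG0 : (V 0 - W 0) * Real.exp (-(0:ℝ)) /
      (1 + (Real.exp (T - 0) - 1) * p * (1 + q)) ^ 2 = 0 := by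
    rw [hV0, hW0, sub_self, zero_mul, zero_div]
  rw [hG0] at hconst
  have hVT : V T = W T := by
    have hdT : (1 + (Real.exp (T - T) - 1) * p * (1 + q)) = 1 := by
      simp
    have h2 : (V T - W T) * Real.exp (-T) / (1:ℝ) ^ 2 = 0 := by
      rw [← hdT]; exact hconst
    have h3 : (V T - W T) * Real.exp (-T) = 0 := by
      simpa using h2
    rcases mul_eq_zero.mp h3 with h | h
    · linarith [sub_eq_zero.mp h]
    · exact absurd h (Real.exp_ne_zero _)
  rw [hVT, hWdef]
  simp only [hW1def, hW2def, sub_self, Real.exp_zero]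
  rw [div_self (Real.exp_ne_zero T)]
  ring
end
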